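/- Let α ∈ (0,1) and let x, y ≥ 0 be real. Then: (i) ∫_0^x ∫_0^y (α^(max(s,t)+s+t) − (1/3)·α^(3·max(s,t))) dt ds = (α^(min(x,y)) − 1)·(α^(2x) + α^(2y))/(2(ln α)²) − min(x,y)·(α^(3x) + α^(3y))/(9 ln α) + (7 − 7·α^(3·min(x,y)))/(27(ln α)²); (ii) ∫_0^x ∫_{ℝ≥0} (α^(max(s,t)+s+t) − (1/3)·α^(3·max(s,t))) dt ds = (14 − 27·α^(2x) + 13·α^(3x))/(54(ln α)²) − x·α^(3x)/(9 ln α). -/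

import Mathlib

/-! For `t ≤ s` the kernel is `α^(2s+t) - α^(3s)/3`, and it is symmetric in `s, t`, so
splitting `∫_0^y k(s,t) dt` at `t = s` leaves elementary exponential integrals. The kernel is
nonnegative, hence `∫_0^∞ k(s,t) dt` is the limit of these closed forms as `y → ∞`. By symmetry
and Fubini, (i) reduces to `x ≤ y`, where for `s ≤ x` the inner integral is one closed-form
expression in `s` whose primitive extends that of `∫_0^∞ k(s,t) dt`. -/

open MeasureTheory Set Real Filter Topology

lemma integral_Ioi_of_tendsto_intervalIntegral_of_nonneg {f : ℝ → ℝ} {a I : ℝ}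
    (hf : ∀ t ∈ Ioi a, 0 ≤ f t) (hfi : ∀ b, IntegrableOn f (Ioc a b))
    (h : Tendsto (fun b => ∫ t in a..b, f t) atTop (𝓝 I)) :
    ∫ t in Ioi a, f t = I := by
  have hnorm : Tendsto (fun b => ∫ t in a..b, ‖f t‖) atTop (𝓝 I) := by
    refine h.congr' ((eventually_ge_atTop a).mono fun b hb => ?_)
    refine intervalIntegral.integral_congr_ae (ae_of_all _ fun t ht => ?_)
    rw [uIoc_of_le hb] at ht
    exact (Real.norm_of_nonneg (hf t ht.1)).symm
  have hint : IntegrableOn f (Ioi a) :=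
    integrableOn_Ioi_of_intervalIntegral_norm_tendsto I a hfi tendsto_id hnorm
  exact tendsto_nhds_unique (intervalIntegral_tendsto_integral_Ioi a hint tendsto_id) h

noncomputable def ssKernel (α s t : ℝ) : ℝ :=
  α ^ (max s t + s + t) - (1/3) * α ^ (3 * max s t)

section SSKernel

variable {α : ℝ}

lemma ssKernel_comm (s t : ℝ) : ssKernel α s t = ssKernel α t s := by
  rw [ssKernel, ssKernel, max_comm]
  ring_nf

lemma ssKernel_of_le {s t : ℝ} (h : t ≤ s) :
    ssKernel α s t = α ^ (2 * s + t) - (1/3) * α ^ (3 * s) := by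
  rw [ssKernel, max_eq_left h]
  ring_nf

lemma ssKernel_of_ge {s t : ℝ} (h : s ≤ t) :
    ssKernel α s t = α ^ (s + 2 * t) - (1/3) * α ^ (3 * t) := by
  rw [ssKernel, max_eq_right h]
  ring_nf

lemma ssKernel_nonneg (hα₀ : 0 < α) (hα₁ : α ≤ 1) (s t : ℝ) :
    0 ≤ ssKernel α s t := by
  have hle : α ^ (3 * max s t) ≤ α ^ (max s t + s + t) :=
    rpow_le_rpow_of_exponent_ge hα₀ hα₁ (by linarith [le_max_left s t, le_max_right s t])
  have hpos := rpow_nonneg hα₀.le (3 * max s t)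
  rw [ssKernel]
  linarith

lemma continuous_ssKernel_uncurry (hα : 0 < α) : Continuous (Function.uncurry (ssKernel α)) := by
  unfold ssKernel Function.uncurry
  fun_prop (disch := positivity)

lemma continuous_ssKernel (hα : 0 < α) (s : ℝ) : Continuous (ssKernel α s) :=
  (continuous_ssKernel_uncurry hα).comp (Continuous.prodMk_right s)

lemma integral_ssKernel_of_le (hα₀ : 0 < α) (hα₁ : α ≠ 1) {s y : ℝ}
    (hy : 0 ≤ y) (hys : y ≤ s) :
    ∫ t in (0:ℝ)..y, ssKernel α s t =
      (α ^ (2 * s + y) - α ^ (2 * s)) / log α - y * α ^ (3 * s) / 3 := by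
  have hl : log α ≠ 0 := log_ne_zero_of_pos_of_ne_one hα₀ hα₁
  have hprim : ∀ t ∈ uIcc 0 y, HasDerivAt
      (fun t => α ^ (2 * s + t) / log α - t * α ^ (3 * s) / 3) (ssKernel α s t) t := by
    intro t ht
    rw [ssKernel_of_le ((uIcc_of_le hy ▸ ht).2.trans hys)]
    refine (((((hasDerivAt_id' t).const_add (2 * s)).const_rpow hα₀).div_const (log α)).sub
      (((hasDerivAt_id' t).mul_const (α ^ (3 * s))).div_const 3)).congr_deriv ?_
    field_simp
  rw [intervalIntegral.integral_eq_sub_of_hasDerivAt hprim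
    ((continuous_ssKernel hα₀ s).intervalIntegrable _ _)]
  ring_nf

lemma integral_ssKernel_of_ge (hα₀ : 0 < α) (hα₁ : α ≠ 1) {s y : ℝ}
    (hs : 0 ≤ s) (hsy : s ≤ y) :
    ∫ t in (0:ℝ)..y, ssKernel α s t =
      11 * α ^ (3 * s) / (18 * log α) - α ^ (2 * s) / log α - s * α ^ (3 * s) / 3 +
        α ^ (s + 2 * y) / (2 * log α) - α ^ (3 * y) / (9 * log α) := by
  have hl : log α ≠ 0 := log_ne_zero_of_pos_of_ne_one hα₀ hα₁
  have hprim : ∀ t ∈ uIcc s y, HasDerivAt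
      (fun t => α ^ (s + 2 * t) / (2 * log α) - α ^ (3 * t) / (9 * log α))
      (ssKernel α s t) t := by
    intro t ht
    rw [ssKernel_of_ge (uIcc_of_le hsy ▸ ht).1]
    refine ((((((hasDerivAt_id' t).const_mul 2).const_add s).const_rpow hα₀).div_const _).sub
      ((((hasDerivAt_id' t).const_mul 3).const_rpow hα₀).div_const _)).congr_deriv ?_
    field_simp
    ring
  have hk := continuous_ssKernel hα₀ s
  rw [← intervalIntegral.integral_add_adjacent_intervals (hk.intervalIntegrable 0 s)
      (hk.intervalIntegrable s y), integral_ssKernel_of_le hα₀ hα₁ hs le_rfl,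
    intervalIntegral.integral_eq_sub_of_hasDerivAt hprim (hk.intervalIntegrable _ _),
    show 2 * s + s = 3 * s by ring, show s + 2 * s = 3 * s by ring]
  field_simp
  ring

lemma integral_Ici_ssKernel (hα₀ : 0 < α) (hα₁ : α < 1) {s : ℝ} (hs : 0 ≤ s) :
    ∫ t in Ici 0, ssKernel α s t =
      11 * α ^ (3 * s) / (18 * log α) - α ^ (2 * s) / log α - s * α ^ (3 * s) / 3 := by
  have hpow : ∀ {g : ℝ → ℝ}, Tendsto g atTop atTop → Tendsto (fun y => α ^ g y) atTop (𝓝 0) :=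
    (tendsto_rpow_atTop_of_base_lt_one α (by linarith) hα₁).comp
  have hlim := ((hpow (tendsto_atTop_add_const_left _ s
      (tendsto_id.const_mul_atTop two_pos))).div_const (2 * log α)).sub
    ((hpow (tendsto_id.const_mul_atTop three_pos)).div_const (9 * log α))
  rw [integral_Ici_eq_integral_Ioi]
  refine integral_Ioi_of_tendsto_intervalIntegral_of_nonneg
    (fun t _ => ssKernel_nonneg hα₀ hα₁.le s t)
    (fun _ => (continuous_ssKernel hα₀ s).integrableOn_Ioc) ?_
  refine Tendsto.congr' ((eventually_ge_atTop s).mono fun y hy =>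
    (integral_ssKernel_of_ge hα₀ hα₁.ne hs hy).symm) ?_
  simpa only [id_eq, zero_div, sub_zero, add_zero, add_sub_assoc] using
    tendsto_const_nhds.add hlim

-- The function is the closed form of `x ↦ ∫ s in 0..x, ∫ t in Ici 0, ssKernel α s t`.
lemma hasDerivAt_integral_integral_Ici_ssKernel (hα₀ : 0 < α) (hα₁ : α ≠ 1) (x : ℝ) :
    HasDerivAt
      (fun x => (14 - 27 * α ^ (2 * x) + 13 * α ^ (3 * x)) / (54 * log α ^ 2) -
        x * α ^ (3 * x) / (9 * log α))
      (11 * α ^ (3 * x) / (18 * log α) - α ^ (2 * x) / log α - x * α ^ (3 * x) / 3) x := by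
  have hl : log α ≠ 0 := log_ne_zero_of_pos_of_ne_one hα₀ hα₁
  have h2 := ((hasDerivAt_id' x).const_mul 2).const_rpow hα₀
  have h3 := ((hasDerivAt_id' x).const_mul 3).const_rpow hα₀
  refine (((((h2.const_mul 27).const_sub 14).add (h3.const_mul 13)).div_const _).sub
    (((hasDerivAt_id' x).mul h3).div_const _)).congr_deriv ?_
  field_simp
  ring

lemma integral_integral_Ici_ssKernel (hα₀ : 0 < α) (hα₁ : α < 1) {x : ℝ} (hx : 0 ≤ x) :
    ∫ s in (0:ℝ)..x, ∫ t in Ici 0, ssKernel α s t =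
      (14 - 27 * α ^ (2 * x) + 13 * α ^ (3 * x)) / (54 * log α ^ 2) -
        x * α ^ (3 * x) / (9 * log α) := by
  rw [intervalIntegral.integral_congr fun s hs =>
      integral_Ici_ssKernel hα₀ hα₁ (uIcc_of_le hx ▸ hs).1,
    intervalIntegral.integral_eq_sub_of_hasDerivAt
      (fun s _ => hasDerivAt_integral_integral_Ici_ssKernel hα₀ hα₁.ne s)
      (by apply Continuous.intervalIntegrable; fun_prop (disch := positivity))]
  norm_num

lemma integral_integral_ssKernel_of_le (hα₀ : 0 < α) (hα₁ : α ≠ 1) {x y : ℝ}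
    (hx : 0 ≤ x) (hxy : x ≤ y) :
    ∫ s in (0:ℝ)..x, ∫ t in (0:ℝ)..y, ssKernel α s t =
      (14 - 27 * α ^ (2 * x) + 13 * α ^ (3 * x)) / (54 * log α ^ 2) -
        x * α ^ (3 * x) / (9 * log α) +
        (α ^ (x + 2 * y) - α ^ (2 * y)) / (2 * log α ^ 2) - x * α ^ (3 * y) / (9 * log α) := by
  have hl : log α ≠ 0 := log_ne_zero_of_pos_of_ne_one hα₀ hα₁
  have hprim : ∀ s ∈ uIcc 0 x, HasDerivAt
      (fun s => (14 - 27 * α ^ (2 * s) + 13 * α ^ (3 * s)) / (54 * log α ^ 2) -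
        s * α ^ (3 * s) / (9 * log α) + α ^ (s + 2 * y) / (2 * log α ^ 2) -
        s * α ^ (3 * y) / (9 * log α))
      (∫ t in (0:ℝ)..y, ssKernel α s t) s := by
    intro s hs
    have hs' := uIcc_of_le hx ▸ hs
    rw [integral_ssKernel_of_ge hα₀ hα₁ hs'.1 (hs'.2.trans hxy)]
    refine (((hasDerivAt_integral_integral_Ici_ssKernel hα₀ hα₁ s).add
      ((((hasDerivAt_id' s).add_const (2 * y)).const_rpow hα₀).div_const _)).sub
      ((hasDerivAt_id' s).mul_const _ |>.div_const _)).congr_deriv ?_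
    field_simp
  rw [intervalIntegral.integral_eq_sub_of_hasDerivAt hprim
    ((intervalIntegral.continuous_parametric_intervalIntegral_of_continuous'
      (continuous_ssKernel_uncurry hα₀) 0 y).intervalIntegrable _ _)]
  norm_num
  ring

lemma integral_integral_ssKernel_comm (hα : 0 < α) (x y : ℝ) :
    ∫ s in (0:ℝ)..x, ∫ t in (0:ℝ)..y, ssKernel α s t =
      ∫ s in (0:ℝ)..y, ∫ t in (0:ℝ)..x, ssKernel α s t := by
  rw [intervalIntegral_intervalIntegral_swap
    (((continuous_ssKernel_uncurry hα).continuousOn.integrableOn_compact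
      (isCompact_uIcc.prod isCompact_uIcc)).mono_set (prod_mono uIoc_subset_uIcc uIoc_subset_uIcc))]
  exact intervalIntegral.integral_congr fun t _ =>
    intervalIntegral.integral_congr fun s _ => ssKernel_comm s t

lemma integral_integral_ssKernel (hα₀ : 0 < α) (hα₁ : α ≠ 1) {x y : ℝ}
    (hx : 0 ≤ x) (hy : 0 ≤ y) :
    ∫ s in (0:ℝ)..x, ∫ t in (0:ℝ)..y, ssKernel α s t =
      (α ^ min x y - 1) * (α ^ (2 * x) + α ^ (2 * y)) / (2 * log α ^ 2) -
        min x y * (α ^ (3 * x) + α ^ (3 * y)) / (9 * log α) +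
        (7 - 7 * α ^ (3 * min x y)) / (27 * log α ^ 2) := by
  wlog hxy : x ≤ y generalizing x y
  · rw [integral_integral_ssKernel_comm hα₀, this hy hx (le_of_not_ge hxy), min_comm]
    ring
  have hl : log α ≠ 0 := log_ne_zero_of_pos_of_ne_one hα₀ hα₁
  rw [integral_integral_ssKernel_of_le hα₀ hα₁ hx hxy, min_eq_left hxy,
    show 3 * x = x + 2 * x by ring, rpow_add hα₀, rpow_add hα₀]
  field_simp
  ring

end SSKernel

/-- Double integrals of the stable-spline kernel:
(i) `∫_0^x ∫_0^y (α^(max(s,t)+s+t) − (1/3)α^(3 max(s,t))) dt ds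
      = (α^(min(x,y)) − 1)(α^(2x) + α^(2y))/(2(ln α)²)
        − min(x,y)(α^(3x) + α^(3y))/(9 ln α) + (7 − 7α^(3 min(x,y)))/(27(ln α)²)`;
(ii) `∫_0^x ∫_{ℝ≥0} (α^(max(s,t)+s+t) − (1/3)α^(3 max(s,t))) dt ds
      = (14 − 27α^(2x) + 13α^(3x))/(54(ln α)²) − x·α^(3x)/(9 ln α)`. -/
theorem nu_SS
    (α : ℝ) (hα : α ∈ Set.Ioo (0 : ℝ) 1)
    (x y : ℝ) (hx : 0 ≤ x) (hy : 0 ≤ y) :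
    (∫ s in (0:ℝ)..x, ∫ t in (0:ℝ)..y,
        (α ^ (max s t + s + t) - (1/3) * α ^ (3 * max s t)) =
      (α ^ min x y - 1) * (α ^ (2 * x) + α ^ (2 * y)) / (2 * (Real.log α) ^ 2) -
        min x y * (α ^ (3 * x) + α ^ (3 * y)) / (9 * Real.log α) +
        (7 - 7 * α ^ (3 * min x y)) / (27 * (Real.log α) ^ 2)) ∧
    (∫ s in (0:ℝ)..x, ∫ t in Set.Ici (0 : ℝ),
        (α ^ (max s t + s + t) - (1/3) * α ^ (3 * max s t)) =
      (14 - 27 * α ^ (2 * x) + 13 * α ^ (3 * x)) / (54 * (Real.log α) ^ 2) -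
        x * α ^ (3 * x) / (9 * Real.log α)) :=
  ⟨integral_integral_ssKernel hα.1 hα.2.ne hx hy,
    integral_integral_Ici_ssKernel hα.1 hα.2 hx⟩
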